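/- Let p ∈ (1,2) and 0 < a₁ < a₂. For i = 1,2, let ψᵢ : [0,1) → [0,∞) be a continuously differentiable function with ψᵢ(0) = 0 satisfying ψᵢ'(y) + (p/(p-1)) ψᵢ(y)^{(p-1)/p} = (p aᵢ^{2-p}/(p-1))(1-y) for all y ∈ (0,1). Then ψ₁(y) < ψ₂(y) for every y ∈ (0,1). -/
import Mathlib


open Set Filter Topology

/-- `ψ : [0,1) → [0,∞)` is continuously differentiable (with derivative `ψd`), `ψ(0) = 0`,
and `ψ' + (p/(p-1)) ψ^{(p-1)/p} = (p a^{2-p}/(p-1))(1-y)` holds on `(0,1)`. -/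
def PsiSol (p a : ℝ) (ψ ψd : ℝ → ℝ) : Prop :=
  (∀ y ∈ Set.Ico (0:ℝ) 1, HasDerivWithinAt ψ (ψd y) (Set.Ico 0 1) y) ∧
  ContinuousOn ψd (Set.Ico 0 1) ∧
  (∀ y ∈ Set.Ico (0:ℝ) 1, 0 ≤ ψ y) ∧
  ψ 0 = 0 ∧
  (∀ y ∈ Set.Ioo (0:ℝ) 1,
    ψd y + (p/(p-1)) * ψ y ^ ((p-1)/p) = (p * a ^ (2-p) / (p-1)) * (1-y))

/-- **Strict monotonicity w.r.t. `a`.** If `0 < a₁ < a₂` and `ψ₁, ψ₂` solve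
the corresponding initial value problems, then `ψ₁(y) < ψ₂(y)` for every `y ∈ (0,1)`. -/
theorem stmt6 (p a₁ a₂ : ℝ) (hp : p ∈ Set.Ioo (1:ℝ) 2) (ha₁ : 0 < a₁) (ha : a₁ < a₂)
    (ψ₁ ψd₁ ψ₂ ψd₂ : ℝ → ℝ) (h₁ : PsiSol p a₁ ψ₁ ψd₁) (h₂ : PsiSol p a₂ ψ₂ ψd₂) :
    ∀ y ∈ Set.Ioo (0:ℝ) 1, ψ₁ y < ψ₂ y := by
  obtain ⟨hp1, hp2⟩ := hp
  obtain ⟨hD₁, hCd₁, hN₁, hZ₁, hE₁⟩ := h₁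
  obtain ⟨hD₂, hCd₂, hN₂, hZ₂, hE₂⟩ := h₂
  set g : ℝ → ℝ := fun y => ψ₂ y - ψ₁ y with hgdef
  set gd : ℝ → ℝ := fun y => ψd₂ y - ψd₁ y with hgddef
  have hpm : (0:ℝ) < p - 1 := by linarith
  have hppos : (0:ℝ) < p := by linarith
  have hK : (0:ℝ) < p / (p-1) := div_pos hppos hpm
  have hα : (0:ℝ) ≤ (p-1)/p := (div_pos hpm hppos).le
  have hrC : a₁ ^ (2-p) < a₂ ^ (2-p) := Real.rpow_lt_rpow ha₁.le ha (by linarith)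
  have hCC : p * a₁ ^ (2-p) / (p-1) < p * a₂ ^ (2-p) / (p-1) := by
    gcongr
  have hDg : ∀ y ∈ Ico (0:ℝ) 1, HasDerivWithinAt g (gd y) (Ico 0 1) y :=
    fun y hy => (hD₂ y hy).sub (hD₁ y hy)
  have hgcont : ContinuousOn g (Ico 0 1) := fun y hy => (hDg y hy).continuousWithinAt
  -- key derivative lower bound when g z ≤ 0
  have hgd_pos : ∀ z ∈ Ioo (0:ℝ) 1, g z ≤ 0 → 0 < gd z := by
    intro z hz hgz
    have hz' : z ∈ Ico (0:ℝ) 1 := ⟨hz.1.le, hz.2⟩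
    have e1 := hE₁ z hz
    have e2 := hE₂ z hz
    have hle : ψ₂ z ≤ ψ₁ z := by
      have : ψ₂ z - ψ₁ z ≤ 0 := hgz
      linarith
    have hX : ψ₂ z ^ ((p-1)/p) ≤ ψ₁ z ^ ((p-1)/p) :=
      Real.rpow_le_rpow (hN₂ z hz') hle hα
    have h1 : p * a₁ ^ (2-p) / (p-1) * (1-z) < p * a₂ ^ (2-p) / (p-1) * (1-z) :=
      mul_lt_mul_of_pos_right hCC (by linarith [hz.2])
    have h2 : p/(p-1) * ψ₂ z ^ ((p-1)/p) ≤ p/(p-1) * ψ₁ z ^ ((p-1)/p) :=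
      mul_le_mul_of_nonneg_left hX hK.le
    show (0:ℝ) < ψd₂ z - ψd₁ z
    linarith
  -- Stage A: g is nonnegative on (0,1)
  have stageA : ∀ y ∈ Ioo (0:ℝ) 1, 0 ≤ g y := by
    intro y₀ hy₀
    by_contra hneg
    push_neg at hneg
    set S : Set ℝ := Icc 0 y₀ ∩ g ⁻¹' (Ici 0) with hSdef
    have hsub : Icc (0:ℝ) y₀ ⊆ Ico 0 1 := fun x hx => ⟨hx.1, lt_of_le_of_lt hx.2 hy₀.2⟩
    have hScl : IsClosed S :=
      (hgcont.mono hsub).preimage_isClosed_of_isClosed isClosed_Icc isClosed_Ici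
    have hScpt : IsCompact S :=
      IsCompact.of_isClosed_subset isCompact_Icc hScl inter_subset_left
    have h0S : (0:ℝ) ∈ S := by
      refine ⟨⟨le_refl 0, hy₀.1.le⟩, ?_⟩
      simp only [mem_preimage, mem_Ici, hgdef]
      simp [hZ₁, hZ₂]
    have htS : sSup S ∈ S := hScpt.sSup_mem ⟨0, h0S⟩
    set t := sSup S with htdef
    have ht0 : 0 ≤ t := htS.1.1
    have hty : t ≤ y₀ := htS.1.2
    have htg : 0 ≤ g t := htS.2
    have htlt : t < y₀ := by
      rcases lt_or_eq_of_le hty with h | h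
      · exact h
      · exfalso; rw [h] at htg; linarith
    have hneg' : ∀ z ∈ Ioc t y₀, g z < 0 := by
      intro z hz
      by_contra h
      push_neg at h
      have hzS : z ∈ S := ⟨⟨le_trans ht0 hz.1.le, hz.2⟩, h⟩
      have := le_csSup hScpt.bddAbove hzS
      linarith [hz.1]
    have hmono : StrictMonoOn g (Icc t y₀) := by
      apply strictMonoOn_of_deriv_pos (convex_Icc t y₀)
      · exact hgcont.mono (fun x hx => ⟨le_trans ht0 hx.1, lt_of_le_of_lt hx.2 hy₀.2⟩)
      · intro z hz
        rw [interior_Icc] at hz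
        have hz01 : z ∈ Ioo (0:ℝ) 1 := ⟨lt_of_le_of_lt ht0 hz.1, lt_trans hz.2 hy₀.2⟩
        have hmem : Ico (0:ℝ) 1 ∈ 𝓝 z :=
          mem_of_superset (isOpen_Ioo.mem_nhds hz01) Ioo_subset_Ico_self
        have hda : HasDerivAt g (gd z) z := (hDg z ⟨hz01.1.le, hz01.2⟩).hasDerivAt hmem
        rw [hda.deriv]
        exact hgd_pos z hz01 (hneg' z ⟨hz.1, hz.2.le⟩).le
    have := hmono (left_mem_Icc.mpr hty) (right_mem_Icc.mpr hty) htlt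
    linarith
  -- Stage B: strict inequality
  intro y hy
  by_contra hle
  push_neg at hle
  have hge : 0 ≤ g y := stageA y hy
  have hgy : g y = 0 := le_antisymm (by simp only [hgdef]; linarith) hge
  have hgdy : 0 < gd y := hgd_pos y hy hgy.le
  have hslope : Tendsto (slope g y) (𝓝[Ioo 0 y] y) (𝓝 (gd y)) := by
    have h' := hasDerivWithinAt_iff_tendsto_slope.mp (hDg y ⟨hy.1.le, hy.2⟩)
    refine h'.mono_left (nhdsWithin_mono y ?_)
    intro z hz
    exact ⟨⟨hz.1.le, hz.2.trans hy.2⟩, by simp [ne_of_lt hz.2]⟩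
  have hev : ∀ᶠ z in 𝓝[Ioo 0 y] y, slope g y z ≤ 0 := by
    filter_upwards [self_mem_nhdsWithin] with z hz
    rw [slope_def_field]
    rw [hgy, sub_zero]
    apply div_nonpos_of_nonneg_of_nonpos
    · exact stageA z ⟨hz.1, hz.2.trans hy.2⟩
    · linarith [hz.2]
  haveI : (𝓝[Ioo (0:ℝ) y] y).NeBot := right_nhdsWithin_Ioo_neBot hy.1
  have : gd y ≤ 0 := le_of_tendsto hslope hev
  linarith
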